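/- Let l ≥ 1, let p > p_1 > p_2 > ⋯ > p_l ≥ 0 be integers, let k_1,…,k_l be positive integers, and let ρ be the largest real root of the polynomial x^p − k_1 x^{p_1} − ⋯ − k_l x^{p_l} (equivalently, the unique positive real solution of 1 = Σ_{j=1}^l k_j x^{−(p−p_j)}). Then there exist integers d ≥ 2 and k ≥ 2 and a basic set B ⊆ A × A^d over an alphabet A of size k such that the entropy limit of X^B exists and equals ln ρ, i.e., ln(ln |B_n(X^B)|)/n → ln ρ as n → ∞. -/

import Mathlib

/-!
Label `2` marks a branching node. Its first child is a free choice between two filler labels,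
and for each `j` exactly `k_j` of its children start a deterministic chain of delay labels that
reaches the next branching node `p - p_j` levels further down. Hence the number `A n` of
`n`-blocks rooted at a branching node satisfies
`A (n + 1) = 2 * ∏ j, A (n + 1 - (p - p_j)) ^ k_j`, so `a n = log (A n)` obeys the linear
recurrence `a (n + 1) = log 2 + ∑ j, k_j * a (n + 1 - (p - p_j))`, whose characteristic root is
`ρ`; induction gives `c * ρ ^ n ≤ a n ≤ C * n * ρ ^ n`. Every other label roots at most `A n`
blocks, so `log |B_n| = a n + O(1)` and `log (log |B_n|) / n → log ρ`.
-/

open Filter Real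

def Block (d k : ℕ) (B : Finset (Fin k × (Fin d → Fin k))) (n : ℕ) :
    Set ({w : List (Fin d) // w.length < n} → Fin k) :=
  {u | ∀ (v : List (Fin d)) (h : v.length + 2 ≤ n),
    (u ⟨v, by omega⟩, fun j => u ⟨v ++ [j], by simp; omega⟩) ∈ B}

def BlockRoot (d k : ℕ) (B : Finset (Fin k × (Fin d → Fin k))) (i : Fin k) (n : ℕ) :
    Set ({w : List (Fin d) // w.length < n} → Fin k) :=
  {u | u ∈ Block d k B n ∧ ∀ h : 0 < n, u ⟨[], by simpa using h⟩ = i}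

instance (d n : ℕ) : Finite {w : List (Fin d) // w.length < n} :=
  (List.finite_length_lt (Fin d) n).to_subtype

section LinearRecurrence

variable {ι : Type*} [Fintype ι] {w : ι → ℝ} {q : ι → ℕ} {p : ℕ} {c ρ : ℝ} {a : ℕ → ℝ}

lemma exists_le_mul_mul_pow_of_recurrence (hw : ∀ j, 0 ≤ w j) (hq : ∀ j, 1 ≤ q j ∧ q j ≤ p)
    (hc : 0 ≤ c) (hρ : 1 ≤ ρ) (hchar : ∀ n, p ≤ n → ∑ j, w j * ρ ^ (n - q j) = ρ ^ n)
    (ha : ∀ n, 0 ≤ a n) (hrec : ∀ n, p ≤ n → a (n + 1) = c + ∑ j, w j * a (n + 1 - q j)) :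
    ∃ C, ∀ n, 1 ≤ n → a n ≤ C * n * ρ ^ n := by
  set C := c + ∑ m ∈ Finset.range (p + 1), a m
  have hC : c ≤ C := le_add_of_nonneg_right (Finset.sum_nonneg fun m _ => ha m)
  have hC0 : 0 ≤ C := hc.trans hC
  refine ⟨C, fun n => ?_⟩
  induction n using Nat.strong_induction_on with
  | _ n ih =>
  intro hn
  have hρn : 1 ≤ ρ ^ n := one_le_pow₀ hρ
  rcases le_or_gt n p with hnp | hnp
  · have hn' : (1 : ℝ) ≤ n := by exact_mod_cast hn
    calc a n ≤ ∑ m ∈ Finset.range (p + 1), a m :=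
          Finset.single_le_sum (fun m _ => ha m) (Finset.mem_range.2 (by omega))
      _ ≤ C := le_add_of_nonneg_left hc
      _ ≤ C * (n * ρ ^ n) := le_mul_of_one_le_right hC0 (one_le_mul_of_one_le_of_one_le hn' hρn)
      _ = C * n * ρ ^ n := (mul_assoc _ _ _).symm
  obtain ⟨m, rfl⟩ : ∃ m, n = m + 1 := ⟨n - 1, by omega⟩
  have hterm : ∀ j, w j * a (m + 1 - q j) ≤ C * m * (w j * ρ ^ (m + 1 - q j)) := by
    intro j
    have hqj := hq j
    have hidx : ((m + 1 - q j : ℕ) : ℝ) ≤ m := by exact_mod_cast (by omega : m + 1 - q j ≤ m)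
    calc w j * a (m + 1 - q j) ≤ w j * (C * ↑(m + 1 - q j) * ρ ^ (m + 1 - q j)) :=
          mul_le_mul_of_nonneg_left (ih _ (by omega) (by omega)) (hw j)
      _ ≤ w j * (C * m * ρ ^ (m + 1 - q j)) := by gcongr; exact hw j
      _ = C * m * (w j * ρ ^ (m + 1 - q j)) := by ring
  calc a (m + 1) = c + ∑ j, w j * a (m + 1 - q j) := hrec m (by omega)
    _ ≤ c + ∑ j, C * m * (w j * ρ ^ (m + 1 - q j)) :=
        (add_le_add_iff_left c).2 (Finset.sum_le_sum fun j _ => hterm j)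
    _ = c + C * m * ρ ^ (m + 1) := by rw [← Finset.mul_sum, hchar (m + 1) (by omega)]
    _ ≤ C * ↑(m + 1) * ρ ^ (m + 1) := by
        push_cast
        nlinarith [le_mul_of_one_le_right hC0 hρn]

lemma exists_mul_pow_le_of_recurrence (hw : ∀ j, 0 ≤ w j) (hq : ∀ j, 1 ≤ q j ∧ q j ≤ p)
    (hc : 0 < c) (hρ : 1 ≤ ρ) (hchar : ∀ n, p ≤ n → ∑ j, w j * ρ ^ (n - q j) = ρ ^ n)
    (ha : ∀ n, 0 ≤ a n) (hrec : ∀ n, p ≤ n → a (n + 1) = c + ∑ j, w j * a (n + 1 - q j)) :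
    ∃ c' > 0, ∀ n, p + 1 ≤ n → c' * ρ ^ n ≤ a n := by
  have hρ0 : 0 < ρ := by linarith
  refine ⟨c / ρ ^ (2 * p + 1), by positivity, fun n => ?_⟩
  induction n using Nat.strong_induction_on with
  | _ n ih =>
  intro hn
  obtain ⟨m, rfl⟩ : ∃ m, n = m + 1 := ⟨n - 1, by omega⟩
  rw [hrec m (by omega)]
  rcases le_or_gt (m + 1) (2 * p + 1) with hsmall | hlarge
  · calc c / ρ ^ (2 * p + 1) * ρ ^ (m + 1) ≤ c / ρ ^ (2 * p + 1) * ρ ^ (2 * p + 1) := by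
          gcongr
      _ = c := div_mul_cancel₀ c (by positivity)
      _ ≤ c + ∑ j, w j * a (m + 1 - q j) :=
          le_add_of_nonneg_right (Finset.sum_nonneg fun j _ => mul_nonneg (hw j) (ha _))
  · calc c / ρ ^ (2 * p + 1) * ρ ^ (m + 1)
        = ∑ j, w j * (c / ρ ^ (2 * p + 1) * ρ ^ (m + 1 - q j)) := by
          rw [← hchar (m + 1) (by omega), Finset.mul_sum]
          exact Finset.sum_congr rfl fun j _ => by ring
      _ ≤ ∑ j, w j * a (m + 1 - q j) := by
          gcongr with j
          · exact hw j
          · exact ih _ (by have := hq j; omega) (by have := hq j; omega)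
      _ ≤ c + ∑ j, w j * a (m + 1 - q j) := le_add_of_nonneg_left hc.le

end LinearRecurrence

lemma sum_mul_pow_sub_eq_pow {ι : Type*} [Fintype ι] {w : ι → ℝ} {e : ι → ℕ} {p : ℕ} {ρ : ℝ}
    (he : ∀ j, e j ≤ p) (hroot : ρ ^ p - ∑ j, w j * ρ ^ e j = 0) {n : ℕ} (hn : p ≤ n) :
    ∑ j, w j * ρ ^ (n - (p - e j)) = ρ ^ n := by
  calc ∑ j, w j * ρ ^ (n - (p - e j)) = ∑ j, ρ ^ (n - p) * (w j * ρ ^ e j) :=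
        Finset.sum_congr rfl fun j _ => by
          rw [show n - (p - e j) = n - p + e j by have := he j; omega, pow_add]; ring
    _ = ρ ^ n := by
        rw [← Finset.mul_sum, ← sub_eq_zero.1 hroot, ← pow_add, Nat.sub_add_cancel hn]

lemma tendsto_log_div_of_pow_bounds {x : ℕ → ℝ} {ρ c C : ℝ} (hρ : 0 < ρ) (hc : 0 < c)
    (hlow : ∀ᶠ n in atTop, c * ρ ^ n ≤ x n) (hup : ∀ᶠ n in atTop, x n ≤ C * n * ρ ^ n) :
    Tendsto (fun n : ℕ => log (x n) / n) atTop (nhds (log ρ)) := by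
  have hlog_div : Tendsto (fun n : ℕ => log n / n) atTop (nhds 0) :=
    isLittleO_log_id_atTop.tendsto_div_nhds_zero.comp tendsto_natCast_atTop_atTop
  have hlower := (tendsto_const_div_atTop_nhds_zero_nat (log c)).add_const (log ρ)
  have hupper :=
    ((tendsto_const_div_atTop_nhds_zero_nat (log C)).add hlog_div).add_const (log ρ)
  rw [zero_add] at hlower
  rw [add_zero, zero_add] at hupper
  refine tendsto_of_tendsto_of_tendsto_of_le_of_le' hlower hupper ?_ ?_ <;>
    filter_upwards [hlow, hup, eventually_gt_atTop 0] with n hlown hupn hn <;>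
    have hn' : (0 : ℝ) < n := by exact_mod_cast hn
  · have hxpos : 0 < c * ρ ^ n := by positivity
    have := log_le_log hxpos hlown
    rw [log_mul hc.ne' (by positivity), log_pow] at this
    rw [div_add' _ _ _ hn'.ne', div_le_div_iff_of_pos_right hn']
    linarith
  · have hpos : 0 < C * n * ρ ^ n := (by positivity : 0 < c * ρ ^ n).trans_le (hlown.trans hupn)
    have hC : 0 < C :=
      pos_of_mul_pos_left ((mul_pos_iff_of_pos_right (by positivity)).1 hpos) hn'.le
    have := log_le_log ((by positivity : 0 < c * ρ ^ n).trans_le hlown) hupn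
    rw [log_mul (by positivity) (by positivity), log_mul hC.ne' hn'.ne', log_pow] at this
    rw [← add_div, div_add' _ _ _ hn'.ne', div_le_div_iff_of_pos_right hn']
    linarith

lemma exists_root_one_le {ι : Type*} [Fintype ι] {w : ι → ℝ} {e : ι → ℕ} {p : ℕ}
    (hw : ∀ j, 0 ≤ w j) (hw1 : 1 ≤ ∑ j, w j) (he : ∀ j, e j < p) :
    ∃ x : ℝ, 1 ≤ x ∧ x ^ p - ∑ j, w j * x ^ e j = 0 := by
  set K := ∑ j, w j
  have hcont : Continuous fun x : ℝ => x ^ p - ∑ j, w j * x ^ e j := by fun_prop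
  have hf1 : (1 : ℝ) ^ p - ∑ j, w j * 1 ^ e j ≤ 0 := by simp; linarith
  have hK : 0 < K + 1 := by linarith
  have hfK : 0 ≤ (K + 1) ^ p - ∑ j, w j * (K + 1) ^ e j := by
    refine sub_nonneg.2 (le_of_mul_le_mul_left ?_ hK)
    calc (K + 1) * ∑ j, w j * (K + 1) ^ e j = ∑ j, w j * (K + 1) ^ (e j + 1) := by
          rw [Finset.mul_sum]
          exact Finset.sum_congr rfl fun j _ => by ring
      _ ≤ ∑ j, w j * (K + 1) ^ p := by
          gcongr with j
          · exact hw j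
          · linarith
          · exact he j
      _ = K * (K + 1) ^ p := by rw [← Finset.sum_mul]
      _ ≤ (K + 1) * (K + 1) ^ p := by gcongr; linarith
  obtain ⟨x, hx, hfx⟩ := intermediate_value_Icc (by linarith : (1 : ℝ) ≤ K + 1)
    hcont.continuousOn ⟨hf1, hfK⟩
  exact ⟨x, hx.1, hfx⟩

section ProductBasicSet

variable {d k : ℕ}

lemma blockRoot_eq_singleton {n : ℕ} (hn : n ≤ 1) (B : Finset (Fin k × (Fin d → Fin k)))
    (i : Fin k) : BlockRoot d k B i n = {fun _ => i} := by
  ext u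
  refine ⟨fun hu => funext fun ⟨w, hw⟩ => ?_, ?_⟩
  · obtain rfl : w = [] := List.eq_nil_of_length_eq_zero (by omega)
    exact hu.2 (by omega)
  · rintro rfl
    exact ⟨fun v hv => absurd hv (by omega), fun _ => rfl⟩

lemma card_blockRoot_of_le_one {n : ℕ} (hn : n ≤ 1) (B : Finset (Fin k × (Fin d → Fin k)))
    (i : Fin k) : Nat.card (BlockRoot d k B i n) = 1 := by
  simp [blockRoot_eq_singleton hn]

variable (allow : Fin k → Fin d → Finset (Fin k))

def prodBasicSet : Finset (Fin k × (Fin d → Fin k)) :=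
  {q | ∀ pos, q.2 pos ∈ allow q.1 pos}

lemma mem_prodBasicSet {i : Fin k} {w : Fin d → Fin k} :
    (i, w) ∈ prodBasicSet allow ↔ ∀ pos, w pos ∈ allow i pos := by
  simp [prodBasicSet]

abbrev BlockRootIn (B : Finset (Fin k × (Fin d → Fin k))) (S : Finset (Fin k)) (n : ℕ) :=
  {g : {w : List (Fin d) // w.length < n + 1} → Fin k //
    g ∈ Block d k B (n + 1) ∧ g ⟨[], n.succ_pos⟩ ∈ S}

def blockRootSuccEquiv (i : Fin k) (n : ℕ) :
    BlockRoot d k (prodBasicSet allow) i (n + 2) ≃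
      ∀ pos, BlockRootIn (prodBasicSet allow) (allow i pos) n where
  toFun u pos :=
    ⟨fun v => u.1 ⟨pos :: v.1, by simpa using v.2⟩,
      fun v hv => u.2.1 (pos :: v) (by simpa using hv), by
      have hroot := u.2.1 [] (by simp)
      rw [u.2.2 (by omega)] at hroot
      exact (mem_prodBasicSet allow).1 hroot pos⟩
  invFun f :=
    ⟨fun
      | ⟨[], _⟩ => i
      | ⟨pos :: v, h⟩ => (f pos).1 ⟨v, by simpa using h⟩,
      fun
        | [], _ => (mem_prodBasicSet allow).2 fun pos => (f pos).2.2
        | pos :: v, hv => (f pos).2.1 v (by simpa using hv),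
      fun _ => rfl⟩
  left_inv u := by
    refine Subtype.ext (funext fun ⟨w, hw⟩ => ?_)
    cases w
    · exact (u.2.2 (by omega)).symm
    · rfl
  right_inv _ := rfl

lemma card_blockRootIn (B : Finset (Fin k × (Fin d → Fin k))) (S : Finset (Fin k)) (n : ℕ) :
    Nat.card (BlockRootIn B S n) = ∑ a ∈ S, Nat.card (BlockRoot d k B a (n + 1)) := by
  classical
  let root : BlockRootIn B S n → S := fun g => ⟨g.1 ⟨[], n.succ_pos⟩, g.2.2⟩
  rw [Nat.card_congr (Equiv.sigmaFiberEquiv root).symm, Nat.card_sigma, ← Finset.sum_coe_sort S]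
  refine Fintype.sum_congr _ _ fun a => Nat.card_congr
    { toFun g := ⟨g.1.1, g.1.2.1, fun _ => congrArg Subtype.val g.2⟩
      invFun g :=
        ⟨⟨g.1, g.2.1, by rw [g.2.2 n.succ_pos]; exact a.2⟩, Subtype.ext (g.2.2 n.succ_pos)⟩
      left_inv _ := rfl
      right_inv _ := rfl }

lemma card_block_succ (B : Finset (Fin k × (Fin d → Fin k))) (n : ℕ) :
    Nat.card (Block d k B (n + 1)) = ∑ a, Nat.card (BlockRoot d k B a (n + 1)) := by
  rw [← card_blockRootIn B Finset.univ n]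
  exact Nat.card_congr (Equiv.subtypeEquivRight fun g => by simp)

lemma card_blockRoot_add_two (i : Fin k) (n : ℕ) :
    Nat.card (BlockRoot d k (prodBasicSet allow) i (n + 2)) =
      ∏ pos, ∑ a ∈ allow i pos, Nat.card (BlockRoot d k (prodBasicSet allow) a (n + 1)) := by
  simp only [Nat.card_congr (blockRootSuccEquiv allow i n), Nat.card_pi, card_blockRootIn]

lemma card_blockRoot_le_succ (hallow : ∀ i pos, (allow i pos).Nonempty) (i : Fin k) (n : ℕ) :
    Nat.card (BlockRoot d k (prodBasicSet allow) i n) ≤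
      Nat.card (BlockRoot d k (prodBasicSet allow) i (n + 1)) := by
  induction n generalizing i with
  | zero => rw [card_blockRoot_of_le_one (by omega), card_blockRoot_of_le_one le_rfl]
  | succ n ih =>
    rw [card_blockRoot_add_two]
    rcases n with _ | n
    · simp only [card_blockRoot_of_le_one le_rfl, Finset.sum_const, smul_eq_mul, mul_one]
      exact Finset.one_le_prod' fun pos _ => (hallow i pos).card_pos
    · rw [card_blockRoot_add_two]
      exact Finset.prod_le_prod' fun pos _ => Finset.sum_le_sum fun a _ => ih a

end ProductBasicSet

section DelayShift

variable {N M : ℕ} (δ : Fin N → Fin (M + 1))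

/-- Labels `0` and `1` are fillers; label `s + 2` with `s ≥ 1` is a delay label, which forces
a branching node (label `2`) exactly `s` levels below it along its first child. -/
def delayAllow : Fin (M + 3) → Fin (N + 1) → Finset (Fin (M + 3))
  | ⟨0, _⟩, _ | ⟨1, _⟩, _ => {0}
  | ⟨2, _⟩, pos => Fin.cases {0, 1} (fun r => {(δ r).addNat 2}) pos
  | ⟨s + 3, h⟩, pos => Fin.cases {⟨s + 2, by omega⟩} (fun _ => {0}) pos

lemma delayAllow_nonempty (i : Fin (M + 3)) (pos : Fin (N + 1)) :
    (delayAllow δ i pos).Nonempty := by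
  match i with
  | ⟨0, _⟩ | ⟨1, _⟩ => simp [delayAllow]
  | ⟨2, _⟩ | ⟨s + 3, _⟩ => cases pos using Fin.cases <;> simp [delayAllow]

noncomputable def delayCount (i : Fin (M + 3)) (n : ℕ) : ℕ :=
  Nat.card (BlockRoot (N + 1) (M + 3) (prodBasicSet (delayAllow δ)) i n)

noncomputable def branchCount (n : ℕ) : ℕ := delayCount δ ⟨2, by omega⟩ n

lemma delayCount_of_le_one (i : Fin (M + 3)) {n : ℕ} (hn : n ≤ 1) : delayCount δ i n = 1 :=
  card_blockRoot_of_le_one hn _ i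

lemma delayCount_add_two (i : Fin (M + 3)) (n : ℕ) :
    delayCount δ i (n + 2) = ∏ pos, ∑ a ∈ delayAllow δ i pos, delayCount δ a (n + 1) :=
  card_blockRoot_add_two _ i n

lemma delayCount_mono (i : Fin (M + 3)) : Monotone (delayCount δ i) :=
  monotone_nat_of_le_succ fun n => card_blockRoot_le_succ _ (delayAllow_nonempty δ) i n

lemma delayCount_filler {i : Fin (M + 3)} (hi : i.val < 2) (n : ℕ) : delayCount δ i n = 1 := by
  induction n generalizing i with
  | zero => exact delayCount_of_le_one δ i (by omega)
  | succ n ih =>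
    rcases n with _ | n
    · exact delayCount_of_le_one δ i le_rfl
    have hallow : ∀ pos, delayAllow δ i pos = {0} := by
      intro pos
      match i, hi with
      | ⟨0, _⟩, _ | ⟨1, _⟩, _ => rfl
    simp [delayCount_add_two, hallow, ih (i := 0) (by simp)]

lemma delayCount_delay (s : Fin (M + 1)) (n : ℕ) :
    delayCount δ (s.addNat 2) n = branchCount δ (n - s) := by
  obtain ⟨s, hs⟩ := s
  induction s generalizing n with
  | zero => rfl
  | succ s ih =>
    obtain hn | ⟨n, rfl⟩ : n ≤ 1 ∨ ∃ m, n = m + 2 := by rcases n with _ | _ | n <;> simp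
    · rw [delayCount_of_le_one δ _ hn, branchCount, delayCount_of_le_one δ _ (by omega)]
    · rw [delayCount_add_two, Fin.prod_univ_succ]
      have h0 : delayAllow δ (Fin.addNat ⟨s + 1, hs⟩ 2) 0 = {Fin.addNat ⟨s, by omega⟩ 2} := rfl
      have hsucc : ∀ r : Fin N, delayAllow δ (Fin.addNat ⟨s + 1, hs⟩ 2) r.succ = {0} :=
        fun _ => rfl
      simp only [h0, hsucc, Finset.sum_singleton, delayCount_filler δ (i := 0) (by simp),
        Finset.prod_const_one, mul_one, ih _ (by omega)]
      congr 1
      omega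

lemma branchCount_add_two (n : ℕ) :
    branchCount δ (n + 2) = 2 * ∏ r, branchCount δ (n + 1 - δ r) := by
  rw [branchCount, delayCount_add_two, Fin.prod_univ_succ]
  have h0 : delayAllow δ ⟨2, by omega⟩ 0 = {0, 1} := rfl
  have hsucc : ∀ r : Fin N, delayAllow δ ⟨2, by omega⟩ r.succ = {(δ r).addNat 2} := fun _ => rfl
  simp only [h0, hsucc, Finset.sum_singleton, delayCount_delay]
  rw [Finset.sum_pair (by simp), delayCount_filler δ (i := 0) (by simp),
    delayCount_filler δ (i := 1) (by simp)]

lemma delayCount_le_branchCount (i : Fin (M + 3)) (n : ℕ) :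
    delayCount δ i n ≤ branchCount δ n := by
  by_cases hi : i.val < 2
  · rw [delayCount_filler δ hi, ← delayCount_of_le_one δ ⟨2, by omega⟩ (Nat.zero_le 1)]
    exact delayCount_mono δ _ (Nat.zero_le n)
  · have hdelay : i = (⟨i - 2, by omega⟩ : Fin (M + 1)).addNat 2 := Fin.ext (by simp; omega)
    rw [hdelay, delayCount_delay]
    exact delayCount_mono δ _ (Nat.sub_le n _)

lemma branchCount_le_card_block (n : ℕ) :
    branchCount δ (n + 1) ≤
      Nat.card (Block (N + 1) (M + 3) (prodBasicSet (delayAllow δ)) (n + 1)) := by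
  rw [card_block_succ]
  exact Finset.single_le_sum (f := fun a => delayCount δ a (n + 1)) (fun _ _ => Nat.zero_le _)
    (Finset.mem_univ _)

lemma card_block_le_branchCount (n : ℕ) :
    Nat.card (Block (N + 1) (M + 3) (prodBasicSet (delayAllow δ)) (n + 1)) ≤
      (M + 3) * branchCount δ (n + 1) := by
  rw [card_block_succ]
  simpa [delayCount] using Finset.sum_le_sum fun i (_ : i ∈ Finset.univ) =>
    delayCount_le_branchCount δ i (n + 1)

lemma one_le_branchCount (n : ℕ) : 1 ≤ branchCount δ n :=
  (delayCount_of_le_one δ _ (Nat.zero_le 1)).symm.le.trans (delayCount_mono δ _ (Nat.zero_le n))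

lemma tendsto_log_log_card_block {ρ c C : ℝ} (hρ : 1 ≤ ρ) (hc : 0 < c)
    (hlow : ∀ᶠ n in atTop, c * ρ ^ n ≤ log (branchCount δ n))
    (hup : ∀ᶠ n in atTop, log (branchCount δ n) ≤ C * n * ρ ^ n) :
    Tendsto (fun n : ℕ => log (log (Nat.card
      (Block (N + 1) (M + 3) (prodBasicSet (delayAllow δ)) n))) / n) atTop (nhds (log ρ)) := by
  refine tendsto_log_div_of_pow_bounds (by linarith) hc (C := C + log (M + 3)) ?_ ?_ <;>
    filter_upwards [hlow, hup, eventually_ge_atTop 1] with n hlown hupn hn <;>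
    obtain ⟨n, rfl⟩ : ∃ m, n = m + 1 := ⟨n - 1, by omega⟩ <;>
    have hbranch : (0 : ℝ) < branchCount δ (n + 1) := by exact_mod_cast one_le_branchCount δ _
  · exact hlown.trans (log_le_log hbranch (by exact_mod_cast branchCount_le_card_block δ n))
  · have hcard : (Nat.card (Block (N + 1) (M + 3) (prodBasicSet (delayAllow δ)) (n + 1)) : ℝ) ≤
        (M + 3) * branchCount δ (n + 1) := by exact_mod_cast card_block_le_branchCount δ n
    have hM : (1 : ℝ) ≤ ↑(n + 1) * ρ ^ (n + 1) :=
      one_le_mul_of_one_le_of_one_le (by simp) (one_le_pow₀ hρ)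
    have hlogM : 0 ≤ log (M + 3 : ℝ) := log_nonneg (by linarith)
    calc log (Nat.card (Block (N + 1) (M + 3) (prodBasicSet (delayAllow δ)) (n + 1)))
        ≤ log ((M + 3) * branchCount δ (n + 1)) :=
          log_le_log (hbranch.trans_le (by exact_mod_cast branchCount_le_card_block δ n)) hcard
      _ = log (M + 3) + log (branchCount δ (n + 1)) := log_mul (by positivity) (by positivity)
      _ ≤ log (M + 3) * (↑(n + 1) * ρ ^ (n + 1)) + C * ↑(n + 1) * ρ ^ (n + 1) := by
          gcongr
          exact le_mul_of_one_le_right hlogM hM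
      _ = (C + log (M + 3)) * ↑(n + 1) * ρ ^ (n + 1) := by ring

end DelayShift

lemma prod_finSigmaFinEquiv_symm_fst {M : Type*} [CommMonoid M] {l : ℕ} (k : Fin l → ℕ)
    (f : Fin l → M) :
    ∏ r : Fin (∑ j, k j), f (finSigmaFinEquiv.symm r).1 = ∏ j, f j ^ k j := by
  rw [← finSigmaFinEquiv.prod_comp]
  simp [Fintype.prod_sigma]

/-- Child `r` of a branching node lies in the group of `kcoef j` children indexed by `j`; its
delay label puts the next branching node `p - pexp j` levels below the branching node. -/
def powerDelays {l : ℕ} (p : ℕ) (pexp kcoef : Fin l → ℕ) : Fin (∑ j, kcoef j) → Fin (p + 1) :=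
  fun r => ⟨p - pexp (finSigmaFinEquiv.symm r).1 - 1, by omega⟩

lemma log_branchCount_powerDelays {l p : ℕ} {pexp : Fin l → ℕ} (kcoef : Fin l → ℕ)
    (hplt : ∀ j, pexp j < p) (n : ℕ) (hn : 1 ≤ n) :
    log (branchCount (powerDelays p pexp kcoef) (n + 1)) =
      log 2 + ∑ j, (kcoef j : ℝ) *
        log (branchCount (powerDelays p pexp kcoef) (n + 1 - (p - pexp j))) := by
  set δ := powerDelays p pexp kcoef
  obtain ⟨n, rfl⟩ : ∃ m, n = m + 1 := ⟨n - 1, by omega⟩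
  have hprod : ∏ r, branchCount δ (n + 1 - δ r) =
      ∏ j, branchCount δ (n + 2 - (p - pexp j)) ^ kcoef j := by
    rw [← prod_finSigmaFinEquiv_symm_fst]
    refine Finset.prod_congr rfl fun r _ => congrArg _ ?_
    have := hplt (finSigmaFinEquiv.symm r).1
    change n + 1 - (p - pexp _ - 1) = _
    omega
  have hpos j : (0 : ℝ) < branchCount δ (n + 2 - (p - pexp j)) := by
    exact_mod_cast one_le_branchCount δ _
  rw [branchCount_add_two, hprod]
  push_cast
  rw [log_mul two_ne_zero (Finset.prod_ne_zero_iff.2 fun j _ => pow_ne_zero _ (hpos j).ne'),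
    log_prod fun j _ => pow_ne_zero _ (hpos j).ne']
  simp only [log_pow]

theorem realization_theorem_general (l : ℕ) (hl : 1 ≤ l) (p : ℕ) (pexp : Fin l → ℕ)
    (kcoef : Fin l → ℕ) (hkpos : ∀ j, 1 ≤ kcoef j)
    (hplt : ∀ j, pexp j < p) (ρ : ℝ)
    (hroot : ρ ^ p - ∑ j, (kcoef j : ℝ) * ρ ^ pexp j = 0)
    (hmax : ∀ x : ℝ, x ^ p - ∑ j, (kcoef j : ℝ) * x ^ pexp j = 0 → x ≤ ρ) :
    ∃ d k : ℕ, 2 ≤ d ∧ 2 ≤ k ∧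
      ∃ B : Finset (Fin k × (Fin d → Fin k)),
        Tendsto (fun n : ℕ => Real.log (Real.log (Nat.card (Block d k B n))) / n)
          atTop (nhds (Real.log ρ)) := by
  have hK : 1 ≤ ∑ j, kcoef j :=
    (hkpos ⟨0, hl⟩).trans (Finset.single_le_sum (fun _ _ => Nat.zero_le _) (Finset.mem_univ _))
  obtain ⟨x, hx1, hx⟩ := exists_root_one_le (fun j => Nat.cast_nonneg (kcoef j))
    (by exact_mod_cast hK) hplt
  have hρ : 1 ≤ ρ := hx1.trans (hmax x hx)
  have hp : 1 ≤ p := Nat.zero_lt_of_lt (hplt ⟨0, hl⟩)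
  have hq j : 1 ≤ p - pexp j ∧ p - pexp j ≤ p := ⟨by have := hplt j; omega, Nat.sub_le _ _⟩
  have hchar n (hn : p ≤ n) := sum_mul_pow_sub_eq_pow (fun j => (hplt j).le) hroot hn
  have hrec n (hn : p ≤ n) := log_branchCount_powerDelays kcoef hplt n (hp.trans hn)
  have hnonneg n : 0 ≤ log (branchCount (powerDelays p pexp kcoef) n) :=
    log_nonneg (by exact_mod_cast one_le_branchCount _ n)
  obtain ⟨C, hC⟩ := exists_le_mul_mul_pow_of_recurrence (fun j => Nat.cast_nonneg (kcoef j)) hq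
    (log_nonneg one_le_two) hρ hchar hnonneg hrec
  obtain ⟨c, hc, hc'⟩ := exists_mul_pow_le_of_recurrence (fun j => Nat.cast_nonneg (kcoef j)) hq
    (log_pos one_lt_two) hρ hchar hnonneg hrec
  exact ⟨_, p + 3, by omega, by omega, _, tendsto_log_log_card_block _ hρ hc
    (eventually_atTop.2 ⟨p + 1, hc'⟩) (eventually_atTop.2 ⟨1, hC⟩)⟩

/-- Realization theorem: if `ρ` is the largest real root of
`x^p - k_1 x^{p_1} - ⋯ - k_l x^{p_l}` with `p > p_1 > ⋯ > p_l ≥ 0` and `k_j ≥ 1`,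
then there are `d, k ≥ 2` and a basic set `B` over `k` symbols on `d`-ary trees whose
tree-shift has entropy `ln ρ`. -/
theorem realization_theorem (l : ℕ) (hl : 1 ≤ l) (p : ℕ) (pexp : Fin l → ℕ)
    (kcoef : Fin l → ℕ) (hkpos : ∀ j, 1 ≤ kcoef j)
    (hanti : StrictAnti pexp) (hplt : ∀ j, pexp j < p) (ρ : ℝ)
    (hroot : ρ ^ p - ∑ j, (kcoef j : ℝ) * ρ ^ pexp j = 0)
    (hmax : ∀ x : ℝ, x ^ p - ∑ j, (kcoef j : ℝ) * x ^ pexp j = 0 → x ≤ ρ) :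
    ∃ d k : ℕ, 2 ≤ d ∧ 2 ≤ k ∧
      ∃ B : Finset (Fin k × (Fin d → Fin k)),
        Tendsto (fun n : ℕ => Real.log (Real.log (Nat.card (Block d k B n))) / n)
          atTop (nhds (Real.log ρ)) :=
  realization_theorem_general l hl p pexp kcoef hkpos hplt ρ hroot hmax
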